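/- The map S^k × S¹ → ℝ^{k+1} ⊕ ℝ^{k+1}, (x,t) ↦ (x + ½ sin t · x, ½ cos t · x), is a Lagrangian embedding with respect to the standard symplectic form ω₀ = Σ_j dp_j ∧ dq_j on ℝ^{k+1} ⊕ ℝ^{k+1} ≅ ℂ^{k+1} (with (p,q) coordinates on the two summands). -/

import Mathlib

open scoped RealInnerProductSpace

/-- The standard symplectic form `ω₀ = Σ_j dp_j ∧ dq_j` on
`ℝ^{k+1} ⊕ ℝ^{k+1}` (with `(p,q)`-coordinates on the two summands):
`ω₀((p,q),(p',q')) = ⟪p,q'⟫ - ⟪q,p'⟫`. -/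
noncomputable def omegaStd (k : ℕ)
    (u v : EuclideanSpace ℝ (Fin (k + 1)) × EuclideanSpace ℝ (Fin (k + 1))) : ℝ :=
  ⟪u.1, v.2⟫ - ⟪u.2, v.1⟫

/-- Nemirovski's explicit map `(x,t) ↦ (x + ½ sin t · x, ½ cos t · x)`,
defined on all of `ℝ^{k+1} × ℝ`. -/
noncomputable def nMap (k : ℕ) (p : EuclideanSpace ℝ (Fin (k + 1)) × ℝ) :
    EuclideanSpace ℝ (Fin (k + 1)) × EuclideanSpace ℝ (Fin (k + 1)) :=
  (p.1 + ((1 / 2) * Real.sin p.2) • p.1, ((1 / 2) * Real.cos p.2) • p.1)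

lemma fderiv_nMap (k : ℕ) (x : EuclideanSpace ℝ (Fin (k + 1))) (t : ℝ)
    (u : EuclideanSpace ℝ (Fin (k + 1))) (s : ℝ) :
    fderiv ℝ (nMap k) (x, t) (u, s) =
      (u + ((1/2) * Real.sin t) • u + (s * ((1/2) * Real.cos t)) • x,
       ((1/2) * Real.cos t) • u + (s * (-((1/2) * Real.sin t))) • x) := by
  have hsin : HasFDerivAt (fun p : EuclideanSpace ℝ (Fin (k+1)) × ℝ => (1/2 : ℝ) * Real.sin p.2)
      (((1/2) * Real.cos t) • ContinuousLinearMap.snd ℝ (EuclideanSpace ℝ (Fin (k+1))) ℝ) (x, t) := by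
    have h1 : HasFDerivAt (fun s : ℝ => (1/2 : ℝ) * Real.sin s)
        (((1/2) * Real.cos t) • (1 : ℝ →L[ℝ] ℝ)) t := by
      have := ((Real.hasDerivAt_sin t).const_mul (1/2 : ℝ)).hasFDerivAt
      exact this.congr_fderiv (by ext; simp [mul_comm])
    exact h1.comp (x, t) (hasFDerivAt_snd (𝕜 := ℝ) (E := EuclideanSpace ℝ (Fin (k+1))) (F := ℝ) (p := (x,t)))
  have hcos : HasFDerivAt (fun p : EuclideanSpace ℝ (Fin (k+1)) × ℝ => (1/2 : ℝ) * Real.cos p.2)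
      ((-((1/2) * Real.sin t)) • ContinuousLinearMap.snd ℝ (EuclideanSpace ℝ (Fin (k+1))) ℝ) (x, t) := by
    have h1 : HasFDerivAt (fun s : ℝ => (1/2 : ℝ) * Real.cos s)
        ((-((1/2) * Real.sin t)) • (1 : ℝ →L[ℝ] ℝ)) t := by
      have := ((Real.hasDerivAt_cos t).const_mul (1/2 : ℝ)).hasFDerivAt
      exact this.congr_fderiv (by ext; simp)
    exact h1.comp (x, t) (hasFDerivAt_snd (𝕜 := ℝ) (E := EuclideanSpace ℝ (Fin (k+1))) (F := ℝ) (p := (x,t)))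
  have hfst : HasFDerivAt (fun p : EuclideanSpace ℝ (Fin (k+1)) × ℝ => p.1)
      (ContinuousLinearMap.fst ℝ (EuclideanSpace ℝ (Fin (k+1))) ℝ) (x, t) := hasFDerivAt_fst
  have hD := (hfst.add (hsin.smul hfst)).prodMk (hcos.smul hfst)
  have hD' : HasFDerivAt (nMap k) _ (x, t) := hD
  rw [hD'.fderiv]
  simp [ContinuousLinearMap.smulRight_apply, mul_comm, smul_smul, add_assoc]

set_option maxHeartbeats 1000000 in
/-- The map `S^k × S¹ → ℝ^{k+1} ⊕ ℝ^{k+1}`, `(x,t) ↦ (x + ½ sin t · x, ½ cos t · x)`,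
is a Lagrangian embedding for the standard symplectic form `Σ_j dp_j ∧ dq_j`:
it is smooth, injective on `S^k × ℝ` modulo period `2π` in `t`, an immersion on
the tangent spaces of `S^k × S¹`, and the symplectic form vanishes on each pair
of image tangent vectors. -/
theorem nemirovski_map_is_lagrangian_embedding (k : ℕ) :
    ContDiff ℝ (⊤ : ℕ∞) (nMap k) ∧
    (∀ (x y : EuclideanSpace ℝ (Fin (k + 1))) (s t : ℝ), ‖x‖ = 1 → ‖y‖ = 1 →
      nMap k (x, s) = nMap k (y, t) → x = y ∧ ∃ m : ℤ, s = t + 2 * Real.pi * m) ∧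
    (∀ (x : EuclideanSpace ℝ (Fin (k + 1))) (t : ℝ), ‖x‖ = 1 →
      ∀ (u : EuclideanSpace ℝ (Fin (k + 1))) (s : ℝ), ⟪x, u⟫ = 0 →
        fderiv ℝ (nMap k) (x, t) (u, s) = 0 → u = 0 ∧ s = 0) ∧
    (∀ (x : EuclideanSpace ℝ (Fin (k + 1))) (t : ℝ), ‖x‖ = 1 →
      ∀ (u v : EuclideanSpace ℝ (Fin (k + 1))) (s s' : ℝ), ⟪x, u⟫ = 0 → ⟪x, v⟫ = 0 →
        omegaStd k (fderiv ℝ (nMap k) (x, t) (u, s))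
          (fderiv ℝ (nMap k) (x, t) (v, s')) = 0) := by
  refine ⟨?_, ?_, ?_, ?_⟩
  · unfold nMap
    exact ((contDiff_fst.add ((contDiff_const.mul (Real.contDiff_sin.comp contDiff_snd)).smul
      contDiff_fst))).prodMk ((contDiff_const.mul (Real.contDiff_cos.comp contDiff_snd)).smul
      contDiff_fst)
  · intro x y s t hx hy h
    simp only [nMap, Prod.mk.injEq] at h
    obtain ⟨h1, h2⟩ := h
    have hxne : x ≠ 0 := by intro h0; rw [h0] at hx; simp at hx
    have ha : x + ((1/2) * Real.sin s) • x = (1 + (1/2) * Real.sin s) • x := by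
      rw [add_smul, one_smul]
    have hb : y + ((1/2) * Real.sin t) • y = (1 + (1/2) * Real.sin t) • y := by
      rw [add_smul, one_smul]
    rw [ha, hb] at h1
    have has : (0:ℝ) < 1 + (1/2) * Real.sin s := by nlinarith [Real.neg_one_le_sin s]
    have hat : (0:ℝ) < 1 + (1/2) * Real.sin t := by nlinarith [Real.neg_one_le_sin t]
    have hnorm := congrArg norm h1
    rw [norm_smul, norm_smul, hx, hy, Real.norm_eq_abs, Real.norm_eq_abs,
      abs_of_pos has, abs_of_pos hat, mul_one, mul_one] at hnorm
    have hsin : Real.sin s = Real.sin t := by linarith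
    have hxy : x = y := by
      rw [hnorm] at h1
      exact smul_right_injective _ (ne_of_gt hat) h1
    refine ⟨hxy, ?_⟩
    rw [hxy] at h2
    have hcos : Real.cos s = Real.cos t := by
      have : ((1/2) * Real.cos s - (1/2) * Real.cos t) • y = 0 := by
        rw [sub_smul, h2, sub_self]
      have hyne : y ≠ 0 := by intro h0; rw [h0] at hy; simp at hy
      rcases smul_eq_zero.mp this with h | h
      · linarith [sub_eq_zero.mp (by linarith : (1/2) * Real.cos s - (1/2) * Real.cos t = 0)]
      · exact absurd h hyne
    have hone : Real.cos (s - t) = 1 := by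
      rw [Real.cos_sub, hsin, hcos]
      nlinarith [Real.sin_sq_add_cos_sq t]
    obtain ⟨n, hn⟩ := (Real.cos_eq_one_iff (s - t)).mp hone
    exact ⟨n, by linarith⟩
  · intro x t hx u s hxu h
    rw [fderiv_nMap] at h
    rw [Prod.ext_iff] at h
    obtain ⟨h1, h2⟩ := h
    simp only [Prod.fst_zero, Prod.snd_zero] at h1 h2
    have hxx : ⟪x, x⟫ = 1 := by
      rw [real_inner_self_eq_norm_sq, hx]; norm_num
    have hux : ⟪u, x⟫ = 0 := by rw [real_inner_comm]; exact hxu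
    have hscos : s * ((1/2) * Real.cos t) = 0 := by
      have := congrArg (fun w => ⟪x, w⟫) h1
      simpa [inner_add_right, inner_smul_right, hxu, hxx, show x ≠ 0 by rintro rfl; simp at hx] using this
    have hu : u = 0 := by
      have := congrArg (fun w => ⟪u, w⟫) h1
      simp only [inner_add_right, inner_smul_right, hux, mul_zero, add_zero, inner_zero_right] at this
      have huu : (1 + (1/2) * Real.sin t) * ⟪u, u⟫ = 0 := by
        rw [add_mul, one_mul]; linarith
      have hpos : (0:ℝ) < 1 + (1/2) * Real.sin t := by nlinarith [Real.neg_one_le_sin t]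
      have : ⟪u, u⟫ = (0:ℝ) := by
        rcases mul_eq_zero.mp huu with h | h
        · linarith
        · exact h
      exact inner_self_eq_zero.mp this
    refine ⟨hu, ?_⟩
    rw [hu] at h2
    simp only [smul_zero, zero_add] at h2
    have hxne : x ≠ 0 := by intro h0; rw [h0] at hx; simp at hx
    have hssin : s * (-((1/2) * Real.sin t)) = 0 := by
      rcases smul_eq_zero.mp h2 with h | h
      · exact h
      · exact absurd h hxne
    nlinarith [Real.sin_sq_add_cos_sq t, sq_nonneg s]
  · intro x t hx u v s s' hxu hxv
    rw [fderiv_nMap, fderiv_nMap]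
    have hux : ⟪u, x⟫ = 0 := by rw [real_inner_comm]; exact hxu
    have hvx : ⟪v, x⟫ = 0 := by rw [real_inner_comm]; exact hxv
    simp only [omegaStd, inner_add_left, inner_add_right, inner_smul_left, inner_smul_right,
      hxu, hxv, hux, hvx, mul_zero, zero_add, add_zero, starRingEnd_apply, star_trivial]
    ring
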